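/- arXiv:cond-mat/0302401 — 2 statements merged into one kernel-verified Lean document; each statement's English description precedes it below -/
import Mathlib

section
/- Let β > 0, α ≥ 0 and let J be a symmetric random variable with |J| ≤ 1 a.s. Suppose 2α·E[tanh²(βJ)] < 1 (the annealed region). Then the only symmetric real random variable g satisfying the distributional fixed-point equation g =_d Σ_{ℓ=1}^{ξ_{2α}} (1/β)·arctanh(tanh(βJ_ℓ)·tanh(βg_ℓ)) is the degenerate one, g = 0 almost surely. -/
/-!
Write `m = E tanh²(βg)` and `c = E tanh²(βJ)`. Each summand `u = β⁻¹ artanh(tanh(βJ) tanh(βg))`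
satisfies `tanh(βu) = tanh(βJ) tanh(βg)`, so `E tanh²(βu) = c m`, and `u` is symmetric because `J`
is. The elementary inequality `tanh²(x + y) + tanh²(x - y) ≤ 2 (tanh² x + tanh² y)`, averaged
against an independent symmetric `Y`, gives `E tanh²(X + Y) ≤ E tanh² X + E tanh² Y`; hence the
partial sums of the `βu`'s satisfy `E tanh²(S_n) ≤ n c m`. Conditioning on the independent Poisson
count, the fixed-point equation yields `m ≤ 2α c m`, so `m = 0` in the annealed region, i.e.
`g = 0` almost surely.
-/

noncomputable section

open MeasureTheory ProbabilityTheory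

/-- The inverse hyperbolic tangent. -/
def artanh (x : ℝ) : ℝ := (1 / 2) * Real.log ((1 + x) / (1 - x))

/-- Index type for the random variables entering the replica symmetric
fixed-point equation: the Poisson counter, the couplings and the effective fields. -/
inductive FPIdx : Type
  | count : FPIdx
  | coupling (ℓ : ℕ) : FPIdx
  | field (ℓ : ℕ) : FPIdx

/-- Value type of each variable. -/
def FPIdxType : FPIdx → Type
  | .count => ℕ
  | .coupling _ => ℝ
  | .field _ => ℝ

/-- Measurable space structure on the value types. -/
def FPIdxMS : ∀ idx : FPIdx, MeasurableSpace (FPIdxType idx)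
  | .count => inferInstanceAs (MeasurableSpace ℕ)
  | .coupling _ => inferInstanceAs (MeasurableSpace ℝ)
  | .field _ => inferInstanceAs (MeasurableSpace ℝ)

/-- The full family of variables, seen as one dependent family. -/
def fpFam {Ω : Type} (ξ : Ω → ℕ) (Jv gv : ℕ → Ω → ℝ) :
    ∀ idx : FPIdx, Ω → FPIdxType idx
  | .count => ξ
  | .coupling ℓ => Jv ℓ
  | .field ℓ => gv ℓ

open Real (tanh)
open scoped Nat

theorem sq_add_div_add_sq_sub_div_le {a b : ℝ} (ha : |a| < 1) (hb : |b| < 1) :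
    ((a + b) / (1 + a * b)) ^ 2 + ((a - b) / (1 - a * b)) ^ 2 ≤ 2 * (a ^ 2 + b ^ 2) := by
  obtain ⟨ha₁, ha₂⟩ := abs_lt.1 ha
  obtain ⟨hb₁, hb₂⟩ := abs_lt.1 hb
  have hplus : 0 < 1 + a * b := by nlinarith
  have hminus : 0 < 1 - a * b := by nlinarith
  -- Clearing denominators, the gap is `2a²b²((a² + b² - 2)² + (1 - a²)(1 - b²)(a² + b²))`.
  have hgap : 0 ≤ 2 * a ^ 2 * b ^ 2 *
      ((a ^ 2 + b ^ 2 - 2) ^ 2 + (1 - a ^ 2) * (1 - b ^ 2) * (a ^ 2 + b ^ 2)) := by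
    have : 0 ≤ (1 - a ^ 2) * (1 - b ^ 2) := mul_nonneg (by nlinarith) (by nlinarith)
    positivity
  rw [div_pow, div_pow, div_add_div _ _ (by positivity) (by positivity),
    div_le_iff₀ (by positivity)]
  nlinarith [hgap]

namespace Real

@[fun_prop]
theorem continuous_tanh : Continuous tanh := by
  simp_rw [funext tanh_eq_sinh_div_cosh]
  exact continuous_sinh.div continuous_cosh fun x => (cosh_pos x).ne'

theorem tanh_add (x y : ℝ) : tanh (x + y) = (tanh x + tanh y) / (1 + tanh x * tanh y) := by
  have := cosh_pos x
  have := cosh_pos y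
  simp only [tanh_eq_sinh_div_cosh, sinh_add, cosh_add]
  field_simp

theorem tanh_eq_zero_iff {x : ℝ} : tanh x = 0 ↔ x = 0 :=
  ⟨fun h => tanh_injective (h.trans tanh_zero.symm), fun h => h ▸ tanh_zero⟩

theorem tanh_sq_add_add_tanh_sq_sub_le (x y : ℝ) :
    tanh (x + y) ^ 2 + tanh (x - y) ^ 2 ≤ 2 * (tanh x ^ 2 + tanh y ^ 2) := by
  rw [sub_eq_add_neg, tanh_add, tanh_add, tanh_neg]
  convert sq_add_div_add_sq_sub_div_le (abs_tanh_lt_one x) (abs_tanh_lt_one y)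
    using 3
  ring

end Real

theorem artanh_eq_real_artanh {x : ℝ} (hx : x ∈ Set.Icc (-1) 1) : artanh x = Real.artanh x :=
  (Real.artanh_eq_half_log hx).symm

theorem artanh_neg (x : ℝ) : artanh (-x) = -artanh x := by
  rw [artanh, artanh, ← sub_eq_add_neg, sub_neg_eq_add, ← inv_div (1 + x), Real.log_inv]
  ring

/-- `β` times a summand `β⁻¹ artanh (tanh (β J) tanh (β g))` of the fixed-point equation, as a
function of `(J, g)`. -/
def edgeMessage (β : ℝ) (p : ℝ × ℝ) : ℝ := artanh (tanh (β * p.1) * tanh (β * p.2))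

@[fun_prop]
theorem measurable_edgeMessage (β : ℝ) : Measurable (edgeMessage β) := by
  unfold edgeMessage artanh
  fun_prop

theorem edgeMessage_neg_left (β x y : ℝ) : edgeMessage β (-x, y) = -edgeMessage β (x, y) := by
  simp [edgeMessage, Real.tanh_neg, artanh_neg]

theorem tanh_edgeMessage (β : ℝ) (p : ℝ × ℝ) :
    tanh (edgeMessage β p) = tanh (β * p.1) * tanh (β * p.2) := by
  have h : |tanh (β * p.1) * tanh (β * p.2)| < 1 := by
    rw [abs_mul]
    exact mul_lt_one_of_nonneg_of_lt_one_left (abs_nonneg _) (Real.abs_tanh_lt_one _)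
      (Real.abs_tanh_lt_one _).le
  rw [edgeMessage, artanh_eq_real_artanh (Set.Ioo_subset_Icc_self (abs_lt.1 h)),
    Real.tanh_artanh (abs_lt.1 h)]

theorem integrable_tanh_sq {Ω : Type*} [MeasurableSpace Ω] {μ : Measure Ω} [IsFiniteMeasure μ]
    {f : Ω → ℝ} (hf : AEStronglyMeasurable f μ) : Integrable (fun ω => tanh (f ω) ^ 2) μ :=
  Integrable.of_bound ((Real.continuous_tanh.comp_aestronglyMeasurable hf).pow 2) 1
    (ae_of_all _ fun ω => by simpa using (Real.tanh_sq_lt_one (f ω)).le)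

theorem measurable_comp_random_index {Ω 𝓧 : Type*} [MeasurableSpace Ω] [MeasurableSpace 𝓧]
    {N : Ω → ℕ} {X : ℕ → Ω → 𝓧} (hN : Measurable N) (hX : ∀ n, Measurable (X n)) :
    Measurable fun ω => X (N ω) ω :=
  (measurable_from_prod_countable_right (f := fun p : ℕ × Ω => X p.1 p.2) hX).comp
    (hN.prodMk measurable_id)

namespace ProbabilityTheory

variable {Ω : Type*} [MeasurableSpace Ω] {μ : Measure Ω}

section Symmetric

variable [IsFiniteMeasure μ] {X Y : Ω → ℝ}

theorem IndepFun.map_prodMk_neg_left (hX : Measurable X) (hY : Measurable Y)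
    (hXY : IndepFun X Y μ) (hXsymm : μ.map (fun ω => -X ω) = μ.map X) :
    μ.map (fun ω => (-X ω, Y ω)) = μ.map (fun ω => (X ω, Y ω)) := by
  rw [(indepFun_iff_map_prod_eq_prod_map_map (f := fun ω => -X ω) hX.neg.aemeasurable
      hY.aemeasurable).1 (hXY.comp measurable_neg measurable_id),
    (indepFun_iff_map_prod_eq_prod_map_map hX.aemeasurable hY.aemeasurable).1 hXY, hXsymm]

theorem IndepFun.map_neg_comp_eq (hX : Measurable X) (hY : Measurable Y)
    (hXY : IndepFun X Y μ) (hXsymm : μ.map (fun ω => -X ω) = μ.map X) {h : ℝ × ℝ → ℝ}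
    (hh : Measurable h) (hodd : ∀ x y, h (-x, y) = -h (x, y)) :
    μ.map (fun ω => -h (X ω, Y ω)) = μ.map (fun ω => h (X ω, Y ω)) := by
  have hcomp : (fun ω => -h (X ω, Y ω)) = h ∘ fun ω => (-X ω, Y ω) :=
    funext fun ω => (hodd _ _).symm
  rw [hcomp, ← Measure.map_map hh (f := fun ω => (-X ω, Y ω)) (hX.neg.prodMk hY),
    hXY.map_prodMk_neg_left hX hY hXsymm, Measure.map_map hh (hX.prodMk hY)]
  rfl

/-- `(X, -Y)` has the law of `(X, Y)`, so `E tanh²(X - Y) = E tanh²(X + Y)`. -/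
theorem IndepFun.integral_tanh_sq_add_le (hX : Measurable X) (hY : Measurable Y)
    (hXY : IndepFun X Y μ) (hYsymm : μ.map (fun ω => -Y ω) = μ.map Y) :
    ∫ ω, tanh (X ω + Y ω) ^ 2 ∂μ ≤ ∫ ω, tanh (X ω) ^ 2 ∂μ + ∫ ω, tanh (Y ω) ^ 2 ∂μ := by
  have hflip : ∫ ω, tanh (X ω - Y ω) ^ 2 ∂μ = ∫ ω, tanh (X ω + Y ω) ^ 2 ∂μ := by
    have hsq : Measurable fun p : ℝ × ℝ => tanh (p.2 - p.1) ^ 2 := by fun_prop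
    have hnegYX : Measurable fun ω => (-Y ω, X ω) := hY.neg.prodMk hX
    have h := congrArg (fun ν => ∫ p, tanh (p.2 - p.1) ^ 2 ∂ν)
      (hXY.symm.map_prodMk_neg_left hY hX hYsymm)
    rw [integral_map hnegYX.aemeasurable hsq.aestronglyMeasurable,
      integral_map (hY.prodMk hX).aemeasurable hsq.aestronglyMeasurable] at h
    simpa [sub_eq_add_neg, add_comm] using h.symm
  have hint : ∀ f : Ω → ℝ, Measurable f → Integrable (fun ω => tanh (f ω) ^ 2) μ :=
    fun _ hf => integrable_tanh_sq hf.aestronglyMeasurable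
  have hadd := hint (fun ω => X ω + Y ω) (hX.add hY)
  have hsub := hint (fun ω => X ω - Y ω) (hX.sub hY)
  have hmono := integral_mono
    (f := fun ω => tanh (X ω + Y ω) ^ 2 + tanh (X ω - Y ω) ^ 2)
    (g := fun ω => 2 * (tanh (X ω) ^ 2 + tanh (Y ω) ^ 2))
    (hadd.add hsub) (((hint X hX).add (hint Y hY)).const_mul 2)
    fun ω => Real.tanh_sq_add_add_tanh_sq_sub_le (X ω) (Y ω)
  rw [integral_add hadd hsub, hflip, integral_const_mul,
    integral_add (hint X hX) (hint Y hY)] at hmono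
  linarith

theorem integral_tanh_sq_sum_range_le {u : ℕ → Ω → ℝ} (hu : ∀ ℓ, Measurable (u ℓ))
    (hind : ∀ n, IndepFun (fun ω => ∑ ℓ ∈ Finset.range n, u ℓ ω) (u n) μ)
    (hsymm : ∀ n, μ.map (fun ω => -u n ω) = μ.map (u n)) {q : ℝ}
    (hq : ∀ n, ∫ ω, tanh (u n ω) ^ 2 ∂μ ≤ q) (n : ℕ) :
    ∫ ω, tanh (∑ ℓ ∈ Finset.range n, u ℓ ω) ^ 2 ∂μ ≤ n * q := by
  induction n with
  | zero => simp
  | succ n ih =>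
    simp only [Finset.sum_range_succ, Nat.cast_succ]
    calc _ ≤ _ := (hind n).integral_tanh_sq_add_le (by fun_prop) (hu n) (hsymm n)
      _ ≤ n * q + q := add_le_add ih (hq n)
      _ = (n + 1) * q := by ring

end Symmetric

theorem IndepFun.integral_tanh_sq_edgeMessage [IsFiniteMeasure μ] {X Y : Ω → ℝ}
    (hX : Measurable X) (hY : Measurable Y) (hXY : IndepFun X Y μ) (β : ℝ) :
    ∫ ω, tanh (edgeMessage β (X ω, Y ω)) ^ 2 ∂μ
      = (∫ x, tanh (β * x) ^ 2 ∂μ.map X) * ∫ y, tanh (β * y) ^ 2 ∂μ.map Y := by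
  have hsq : Measurable fun x => tanh (β * x) ^ 2 := by fun_prop
  simp_rw [tanh_edgeMessage, mul_pow]
  rw [integral_map hX.aemeasurable hsq.aestronglyMeasurable,
    integral_map hY.aemeasurable hsq.aestronglyMeasurable]
  exact (hXY.comp hsq hsq).integral_fun_mul_eq_mul_integral
    (hsq.comp hX).aestronglyMeasurable (hsq.comp hY).aestronglyMeasurable

theorem hasSum_integral_comp_of_indepFun [IsFiniteMeasure μ] {𝓧 : Type*} [MeasurableSpace 𝓧]
    {N : Ω → ℕ} {X : ℕ → Ω → 𝓧} {f : 𝓧 → ℝ} (hN : Measurable N) (hX : ∀ n, Measurable (X n))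
    (hf : Measurable f) {C : ℝ} (hfC : ∀ x, |f x| ≤ C) (hind : ∀ n, IndepFun N (X n) μ) :
    HasSum (fun n => μ.real (N ⁻¹' {n}) * ∫ ω, f (X n ω) ∂μ) (∫ ω, f (X (N ω) ω) ∂μ) := by
  have hlevel : ∀ n, MeasurableSet (N ⁻¹' {n}) := fun n => hN (measurableSet_singleton n)
  have hmeas : Measurable fun ω => f (X (N ω) ω) := hf.comp (measurable_comp_random_index hN hX)
  have hint : Integrable (fun ω => f (X (N ω) ω)) μ :=
    Integrable.of_bound hmeas.aestronglyMeasurable C (ae_of_all _ fun ω => hfC _)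
  have hsum := hasSum_integral_iUnion hlevel (pairwise_disjoint_fiber N) hint.integrableOn
  rw [← Set.preimage_iUnion, Set.iUnion_of_singleton, Set.preimage_univ,
    Measure.restrict_univ] at hsum
  have hterm : ∀ n, ∫ ω in N ⁻¹' {n}, f (X (N ω) ω) ∂μ = μ.real (N ⁻¹' {n}) * ∫ ω, f (X n ω) ∂μ :=
    fun n => calc
      ∫ ω in N ⁻¹' {n}, f (X (N ω) ω) ∂μ = ∫ ω in N ⁻¹' {n}, f (X n ω) ∂μ :=
        setIntegral_congr_fun (hlevel n) fun ω hω => by rw [Set.mem_preimage.1 hω]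
      _ = μ.real (N ⁻¹' {n}) * ∫ ω, f (X n ω) ∂μ :=
        Indep.setIntegral_eq_mul hN.comap_le ((IndepFun_iff_Indep _ _ _).1 (hind n))
          (hX n).aemeasurable ⟨{n}, measurableSet_singleton n, rfl⟩ hf.aestronglyMeasurable
  simpa only [hterm] using hsum

theorem iIndepFun.indepFun_of_measurable_iSup {ι : Type*} {β : ι → Type*}
    {m : ∀ i, MeasurableSpace (β i)} {f : ∀ i, Ω → β i} (hf : iIndepFun f μ)
    (hmeas : ∀ i, Measurable (f i)) {S T : Set ι} (hST : Disjoint S T) {γ δ : Type*}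
    [MeasurableSpace γ] [MeasurableSpace δ] {X : Ω → γ} {Y : Ω → δ}
    (hX : Measurable[⨆ i ∈ S, (m i).comap (f i)] X)
    (hY : Measurable[⨆ i ∈ T, (m i).comap (f i)] Y) : IndepFun X Y μ := by
  rw [IndepFun_iff_Indep]
  exact indep_of_indep_of_le_right (indep_of_indep_of_le_left
    (indep_iSup_of_disjoint (fun i => (hmeas i).comap_le) hf.iIndep hST) hX.comap_le) hY.comap_le

end ProbabilityTheory

theorem hasSum_mul_poisson (r : ℝ) :
    HasSum (fun n : ℕ => n * (Real.exp (-r) * r ^ n / n !)) r := by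
  have hexp := ((NormedSpace.expSeries_div_hasSum_exp r).mul_left (Real.exp (-r))).mul_left r
  rw [← Real.exp_eq_exp_ℝ, ← Real.exp_add, neg_add_cancel, Real.exp_zero, mul_one] at hexp
  refine (hasSum_nat_add_iff' 1).1 ?_
  simp only [Finset.sum_range_one, Nat.cast_zero, zero_mul, sub_zero]
  refine hexp.congr_fun fun n => ?_
  rw [Nat.factorial_succ, pow_succ]
  push_cast
  field_simp

theorem le_mul_of_hasSum_poisson {r q m : ℝ} (hr : 0 ≤ r) {M : ℕ → ℝ} (hM : ∀ n, M n ≤ n * q)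
    (h : HasSum (fun n => Real.exp (-r) * r ^ n / n ! * M n) m) : m ≤ r * q :=
  hasSum_le (fun n => by
      calc _ ≤ Real.exp (-r) * r ^ n / n ! * (n * q) :=
            mul_le_mul_of_nonneg_left (hM n) (by positivity)
        _ = _ := by ring)
    h ((hasSum_mul_poisson r).mul_right q)

theorem eq_dirac_zero_of_integral_tanh_sq_eq_zero {ν : Measure ℝ} [IsProbabilityMeasure ν]
    {β : ℝ} (hβ : β ≠ 0) (h : ∫ x, tanh (β * x) ^ 2 ∂ν = 0) : ν = Measure.dirac 0 := by
  have hzero : ∀ᵐ x ∂ν, tanh (β * x) ^ 2 = 0 :=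
    (integral_eq_zero_iff_of_nonneg (fun x => sq_nonneg _)
      (integrable_tanh_sq (by fun_prop))).1 h
  have hae : ∀ᵐ x ∂ν, x = 0 := hzero.mono fun x hx => by
    simpa [hβ, Real.tanh_eq_zero_iff] using hx
  calc ν = ν.map id := Measure.map_id.symm
    _ = ν.map fun _ => 0 := Measure.map_congr hae
    _ = Measure.dirac 0 := by simp [Measure.map_const]

section FixedPointFamily

attribute [local instance] FPIdxMS

variable {Ω : Type} {ξ : Ω → ℕ} {Jv gv : ℕ → Ω → ℝ}

theorem measurable_fpFam [MeasurableSpace Ω] (hξ : Measurable ξ) (hJ : ∀ ℓ, Measurable (Jv ℓ))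
    (hg : ∀ ℓ, Measurable (gv ℓ)) : ∀ i, Measurable (fpFam ξ Jv gv i)
  | .count => hξ
  | .coupling ℓ => hJ ℓ
  | .field ℓ => hg ℓ

theorem measurable_iSup_comap_fpFam {s : Set FPIdx} {i : FPIdx} (hi : i ∈ s) :
    Measurable[⨆ j ∈ s, (FPIdxMS j).comap (fpFam ξ Jv gv j)] (fpFam ξ Jv gv i) :=
  (comap_measurable (fpFam ξ Jv gv i)).mono
    (le_iSup₂ (f := fun j _ => (FPIdxMS j).comap (fpFam ξ Jv gv j)) i hi) le_rfl

theorem measurable_iSup_comap_fpFam_pair {s : Set FPIdx} {ℓ : ℕ} (hc : .coupling ℓ ∈ s)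
    (hf : .field ℓ ∈ s) {F : ℝ × ℝ → ℝ} (hF : Measurable F) :
    Measurable[⨆ j ∈ s, (FPIdxMS j).comap (fpFam ξ Jv gv j)] fun ω => F (Jv ℓ ω, gv ℓ ω) :=
  hF.comp ((measurable_iSup_comap_fpFam hc).prodMk (measurable_iSup_comap_fpFam hf))

def FPIdx.below (n : ℕ) : Set FPIdx := {i | ∃ ℓ < n, i = .coupling ℓ ∨ i = .field ℓ}

theorem measurable_iSup_comap_fpFam_sum_range {F : ℝ × ℝ → ℝ} (hF : Measurable F) (n : ℕ) :
    Measurable[⨆ j ∈ FPIdx.below n, (FPIdxMS j).comap (fpFam ξ Jv gv j)]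
      fun ω => ∑ ℓ ∈ Finset.range n, F (Jv ℓ ω, gv ℓ ω) :=
  Finset.measurable_fun_sum (f := fun ℓ ω => F (Jv ℓ ω, gv ℓ ω)) _ fun ℓ hℓ =>
    measurable_iSup_comap_fpFam_pair
    (Exists.intro ℓ ⟨Finset.mem_range.1 hℓ, .inl rfl⟩)
    (Exists.intro ℓ ⟨Finset.mem_range.1 hℓ, .inr rfl⟩) hF

variable [MeasurableSpace Ω] {μ : Measure Ω}

theorem indepFun_sum_range_fpFam (hindep : iIndepFun (m := FPIdxMS) (fpFam ξ Jv gv) μ)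
    (hmeas : ∀ i, Measurable (fpFam ξ Jv gv i)) {F : ℝ × ℝ → ℝ} (hF : Measurable F) (n : ℕ) :
    IndepFun (fun ω => ∑ ℓ ∈ Finset.range n, F (Jv ℓ ω, gv ℓ ω))
      (fun ω => F (Jv n ω, gv n ω)) μ := by
  refine hindep.indepFun_of_measurable_iSup hmeas (T := {.coupling n, .field n}) ?_
    (measurable_iSup_comap_fpFam_sum_range hF n)
    (measurable_iSup_comap_fpFam_pair (.inl rfl) (.inr rfl) hF)
  rw [Set.disjoint_left]
  rintro _ ⟨ℓ, hℓ, rfl | rfl⟩ <;> simp [hℓ.ne]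

theorem indepFun_count_sum_range_fpFam (hindep : iIndepFun (m := FPIdxMS) (fpFam ξ Jv gv) μ)
    (hmeas : ∀ i, Measurable (fpFam ξ Jv gv i)) {F : ℝ × ℝ → ℝ} (hF : Measurable F) (n : ℕ) :
    IndepFun ξ (fun ω => ∑ ℓ ∈ Finset.range n, F (Jv ℓ ω, gv ℓ ω)) μ := by
  refine hindep.indepFun_of_measurable_iSup hmeas (S := {.count}) ?_
    (measurable_iSup_comap_fpFam (i := .count) rfl) (measurable_iSup_comap_fpFam_sum_range hF n)
  simp [FPIdx.below]

theorem integral_tanh_sq_sum_edgeMessage_le [IsFiniteMeasure μ]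
    (hindep : iIndepFun (m := FPIdxMS) (fpFam ξ Jv gv) μ)
    (hmeas : ∀ i, Measurable (fpFam ξ Jv gv i)) {ρJ ρg : Measure ℝ}
    (hJ : ∀ ℓ, μ.map (Jv ℓ) = ρJ) (hg : ∀ ℓ, μ.map (gv ℓ) = ρg)
    (hJsymm : ρJ.map (fun x => -x) = ρJ) (β : ℝ) (n : ℕ) :
    ∫ ω, tanh (∑ ℓ ∈ Finset.range n, edgeMessage β (Jv ℓ ω, gv ℓ ω)) ^ 2 ∂μ
      ≤ n * ((∫ x, tanh (β * x) ^ 2 ∂ρJ) * ∫ x, tanh (β * x) ^ 2 ∂ρg) := by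
  have measJ (ℓ : ℕ) : Measurable (Jv ℓ) := hmeas (.coupling ℓ)
  have measg (ℓ : ℕ) : Measurable (gv ℓ) := hmeas (.field ℓ)
  have hJg (ℓ : ℕ) : IndepFun (Jv ℓ) (gv ℓ) μ :=
    hindep.indepFun (i := .coupling ℓ) (j := .field ℓ) (by simp)
  have hJneg (ℓ : ℕ) : μ.map (fun ω => -Jv ℓ ω) = μ.map (Jv ℓ) := by
    rw [hJ ℓ, ← hJsymm, ← hJ ℓ, Measure.map_map measurable_neg (measJ ℓ)]
    rfl
  refine integral_tanh_sq_sum_range_le (fun ℓ => by fun_prop)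
    (indepFun_sum_range_fpFam hindep hmeas (measurable_edgeMessage β))
    (fun ℓ => (hJg ℓ).map_neg_comp_eq (measJ ℓ) (measg ℓ) (hJneg ℓ) (measurable_edgeMessage β)
      (edgeMessage_neg_left β)) (fun ℓ => ?_) n
  rw [(hJg ℓ).integral_tanh_sq_edgeMessage (measJ ℓ) (measg ℓ) β, hJ ℓ, hg ℓ]

end FixedPointFamily

theorem replica_symmetric_fixed_point_unique_general
    (β α : ℝ) (hβ : 0 < β) (hα : 0 ≤ α)
    (ρJ ρg : Measure ℝ) [IsProbabilityMeasure ρJ] [IsProbabilityMeasure ρg]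
    (hJsymm : Measure.map (fun x => -x) ρJ = ρJ)
    (hann : 2 * α * ∫ x, Real.tanh (β * x) ^ 2 ∂ρJ < 1)
    (Ω : Type) [MeasureSpace Ω] [IsProbabilityMeasure (ℙ : Measure Ω)]
    (ξ : Ω → ℕ) (Jv gv : ℕ → Ω → ℝ)
    (measξ : Measurable ξ)
    (measJ : ∀ ℓ, Measurable (Jv ℓ))
    (measg : ∀ ℓ, Measurable (gv ℓ))
    (hξ : ∀ k : ℕ, (ℙ : Measure Ω) (ξ ⁻¹' {k})
      = ENNReal.ofReal (Real.exp (-(2 * α)) * (2 * α) ^ k / (Nat.factorial k)))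
    (hJ : ∀ ℓ, Measure.map (Jv ℓ) (ℙ : Measure Ω) = ρJ)
    (hg : ∀ ℓ, Measure.map (gv ℓ) (ℙ : Measure Ω) = ρg)
    (hindep : iIndepFun (m := FPIdxMS) (fpFam ξ Jv gv) (ℙ : Measure Ω))
    (hfix : Measure.map
        (fun ω => ∑ ℓ ∈ Finset.range (ξ ω),
          β⁻¹ * artanh (Real.tanh (β * Jv ℓ ω) * Real.tanh (β * gv ℓ ω)))
        (ℙ : Measure Ω) = ρg) :
    ρg = Measure.dirac 0 := by
  set m := ∫ x, tanh (β * x) ^ 2 ∂ρg with hm_def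
  set S : ℕ → Ω → ℝ := fun n ω => ∑ ℓ ∈ Finset.range n, edgeMessage β (Jv ℓ ω, gv ℓ ω)
    with hS_def
  have hfam := measurable_fpFam measξ measJ measg
  have hS (n : ℕ) : Measurable (S n) := Finset.measurable_fun_sum _ fun ℓ _ => by fun_prop
  have hmix := hasSum_integral_comp_of_indepFun (f := fun x => tanh x ^ 2) measξ hS
    (by fun_prop) (C := 1)
    (fun x => (abs_of_nonneg (sq_nonneg _)).trans_le (Real.tanh_sq_lt_one x).le)
    (indepFun_count_sum_range_fpFam hindep hfam (measurable_edgeMessage β))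
  have hfix' : (fun ω => ∑ ℓ ∈ Finset.range (ξ ω),
      β⁻¹ * artanh (tanh (β * Jv ℓ ω) * tanh (β * gv ℓ ω))) = fun ω => β⁻¹ * S (ξ ω) ω := by
    simp [hS_def, edgeMessage, Finset.mul_sum]
  have hm : ∫ ω, tanh (S (ξ ω) ω) ^ 2 ∂ℙ = m := by
    rw [hm_def, ← hfix, hfix', integral_map ((measurable_comp_random_index measξ hS).const_mul
      β⁻¹).aemeasurable (by fun_prop)]
    simp [hβ.ne']
  have hpois (n : ℕ) :
      (ℙ : Measure Ω).real (ξ ⁻¹' {n}) = Real.exp (-(2 * α)) * (2 * α) ^ n / n ! := by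
    rw [measureReal_def, hξ, ENNReal.toReal_ofReal (by positivity)]
  have hbound := le_mul_of_hasSum_poisson (r := 2 * α) (by positivity)
    (integral_tanh_sq_sum_edgeMessage_le hindep hfam hJ hg hJsymm β)
    (by simpa [hpois, hm] using hmix)
  have hc : 0 ≤ ∫ x, tanh (β * x) ^ 2 ∂ρJ := integral_nonneg fun _ => sq_nonneg _
  have hm0 : 0 ≤ m := integral_nonneg fun _ => sq_nonneg _
  exact eq_dirac_zero_of_integral_tanh_sq_eq_zero hβ.ne' (by nlinarith)

/-- **Uniqueness of the replica symmetric fixed point in the annealed region.**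
Let `β > 0`, `α ≥ 0`, let `ρJ` be the law of a symmetric coupling `J` with `|J| ≤ 1`
a.s., and assume `2α E[tanh²(βJ)] < 1`.  If a symmetric law `ρg` satisfies the
distributional fixed-point equation
`g =_d Σ_{ℓ<ξ_{2α}} (1/β) artanh(tanh(βJ_ℓ) tanh(βg_ℓ))`
(realized on some probability space with `ξ_{2α}` Poisson of mean `2α`,
`(J_ℓ)` i.i.d. with law `ρJ`, `(g_ℓ)` i.i.d. with law `ρg`, all mutually
independent), then `ρg` is the Dirac mass at `0`, i.e. `g = 0` almost surely. -/
theorem replica_symmetric_fixed_point_unique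
    (β α : ℝ) (hβ : 0 < β) (hα : 0 ≤ α)
    (ρJ ρg : Measure ℝ) [IsProbabilityMeasure ρJ] [IsProbabilityMeasure ρg]
    (hJsymm : Measure.map (fun x => -x) ρJ = ρJ)
    (hJbdd : ∀ᵐ x ∂ρJ, |x| ≤ 1)
    (hgsymm : Measure.map (fun x => -x) ρg = ρg)
    (hann : 2 * α * ∫ x, Real.tanh (β * x) ^ 2 ∂ρJ < 1)
    (Ω : Type) [MeasureSpace Ω] [IsProbabilityMeasure (ℙ : Measure Ω)]
    (ξ : Ω → ℕ) (Jv gv : ℕ → Ω → ℝ)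
    (measξ : Measurable ξ)
    (measJ : ∀ ℓ, Measurable (Jv ℓ))
    (measg : ∀ ℓ, Measurable (gv ℓ))
    (hξ : ∀ k : ℕ, (ℙ : Measure Ω) (ξ ⁻¹' {k})
      = ENNReal.ofReal (Real.exp (-(2 * α)) * (2 * α) ^ k / (Nat.factorial k)))
    (hJ : ∀ ℓ, Measure.map (Jv ℓ) (ℙ : Measure Ω) = ρJ)
    (hg : ∀ ℓ, Measure.map (gv ℓ) (ℙ : Measure Ω) = ρg)
    (hindep : iIndepFun (m := FPIdxMS) (fpFam ξ Jv gv) (ℙ : Measure Ω))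
    (hfix : Measure.map
        (fun ω => ∑ ℓ ∈ Finset.range (ξ ω),
          β⁻¹ * artanh (Real.tanh (β * Jv ℓ ω) * Real.tanh (β * gv ℓ ω)))
        (ℙ : Measure Ω) = ρg) :
    ρg = Measure.dirac 0 :=
  replica_symmetric_fixed_point_unique_general β α hβ hα ρJ ρg hJsymm hann Ω ξ Jv gv measξ measJ
    measg hξ hJ hg hindep hfix
end
end

section
/- (Hubbard–Stratonovich bound for the coupled entropy.) For every N ∈ ℕ and every 0 ≤ λ₀ < 1, Σ_{σ¹,σ²∈{−1,1}^N} exp( (λ₀/(2N))·( Σ_{i=1}^N σ¹_i σ²_i )² ) ≤ 4^N · (1 − λ₀)^{−1/2}. -/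
/-! Hubbard–Stratonovich: `exp (s² / 2) = 𝔼 exp (s g)` for a standard Gaussian `g`. With
`s = √(λ₀ / N) · ⟨σ¹, σ²⟩`, exchanging the finite spin sum and the expectation turns the sum into
`𝔼 (4 cosh (√(λ₀ / N) g))ᴺ`, since the spins decouple site by site. The bound
`cosh x ≤ exp (x² / 2)` leaves `4ᴺ 𝔼 exp (λ₀ g² / 2) = 4ᴺ (1 - λ₀)^(-1/2)`. -/

noncomputable section

/-- The spin value (±1) associated to a Boolean. -/
def spin (b : Bool) : ℝ := if b then 1 else -1

open Real MeasureTheory ProbabilityTheory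

lemma exp_sq_div_two_eq_integral_exp_mul_gaussianReal (t : ℝ) :
    exp (t ^ 2 / 2) = ∫ x, exp (t * x) ∂gaussianReal 0 1 := by
  simpa [mgf] using (congrFun (mgf_fun_id_gaussianReal (μ := 0) (v := 1)) t).symm

lemma gaussianPDFReal_mul_exp_mul_sq (B x : ℝ) :
    gaussianPDFReal 0 1 x * exp (B * x ^ 2 / 2) = (√(2 * π))⁻¹ * exp (-((1 - B) / 2) * x ^ 2) := by
  rw [gaussianPDFReal, mul_assoc, ← exp_add]
  simp only [NNReal.coe_one, mul_one, sub_zero]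
  ring_nf

lemma integrable_exp_mul_sq_gaussianReal {B : ℝ} (hB : B < 1) :
    Integrable (fun x ↦ exp (B * x ^ 2 / 2)) (gaussianReal 0 1) := by
  rw [gaussianReal_of_var_ne_zero 0 one_ne_zero,
    integrable_withDensity_iff_integrable_smul' (measurable_gaussianPDF 0 1)
      (ae_of_all _ fun _ ↦ gaussianPDF_lt_top)]
  simp_rw [toReal_gaussianPDF, smul_eq_mul, gaussianPDFReal_mul_exp_mul_sq]
  exact (integrable_exp_neg_mul_sq (by linarith)).const_mul _

lemma integral_exp_mul_sq_gaussianReal {B : ℝ} (hB : B < 1) :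
    ∫ x, exp (B * x ^ 2 / 2) ∂gaussianReal 0 1 = (1 - B) ^ (-(1 / 2) : ℝ) := by
  have hB' : 0 < 1 - B := by linarith
  rw [integral_gaussianReal_eq_integral_smul one_ne_zero]
  simp_rw [smul_eq_mul, gaussianPDFReal_mul_exp_mul_sq, integral_const_mul, integral_gaussian,
    rpow_neg hB'.le, ← sqrt_eq_rpow, div_div_eq_mul_div, mul_comm π 2,
    sqrt_div (by positivity : (0 : ℝ) ≤ 2 * π)]
  field_simp

theorem sum_exp_sq_div_two_le {ι : Type*} [Fintype ι] (S : ι → ℝ) {A B : ℝ} (hB : B < 1)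
    (hmgf : ∀ t, ∑ i, exp (t * S i) ≤ A * exp (B * t ^ 2 / 2)) :
    ∑ i, exp (S i ^ 2 / 2) ≤ A * (1 - B) ^ (-(1 / 2) : ℝ) := by
  have hint : ∀ i, Integrable (fun x ↦ exp (x * S i)) (gaussianReal 0 1) := fun i ↦ by
    simpa only [mul_comm] using integrable_exp_mul_gaussianReal (μ := 0) (v := 1) (S i)
  calc ∑ i, exp (S i ^ 2 / 2) = ∫ x, ∑ i, exp (x * S i) ∂gaussianReal 0 1 := by
        rw [integral_finsetSum _ fun i _ ↦ hint i]
        simp_rw [exp_sq_div_two_eq_integral_exp_mul_gaussianReal, mul_comm]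
    _ ≤ ∫ x, A * exp (B * x ^ 2 / 2) ∂gaussianReal 0 1 :=
        integral_mono (integrable_finsetSum _ fun i _ ↦ hint i)
          ((integrable_exp_mul_sq_gaussianReal hB).const_mul A) hmgf
    _ = A * (1 - B) ^ (-(1 / 2) : ℝ) := by
        rw [integral_const_mul, integral_exp_mul_sq_gaussianReal hB]

lemma sum_sum_exp_mul_overlap {ι : Type*} [Fintype ι] [DecidableEq ι] (t : ℝ) :
    ∑ σ1 : ι → Bool, ∑ σ2 : ι → Bool, exp (t * ∑ i, spin (σ1 i) * spin (σ2 i))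
      = (4 * cosh t) ^ Fintype.card ι := by
  have hsite : ∑ b : Bool × Bool, exp (t * (spin b.1 * spin b.2)) = 4 * cosh t := by
    simp only [Fintype.sum_prod_type, Fintype.sum_bool, spin, ↓reduceIte, Bool.false_eq_true,
      mul_one, mul_neg, neg_neg, cosh_eq]
    ring
  rw [← hsite, ← Finset.card_univ, ← Finset.prod_const, Fintype.prod_sum,
    ← Fintype.sum_prod_type',
    ← (Equiv.arrowProdEquivProdArrow ι (fun _ ↦ Bool) (fun _ ↦ Bool)).sum_comp]
  simp_rw [Finset.mul_sum, exp_sum]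
  rfl

lemma sum_sum_exp_mul_overlap_le {ι : Type*} [Fintype ι] [DecidableEq ι] (t : ℝ) :
    ∑ σ1 : ι → Bool, ∑ σ2 : ι → Bool, exp (t * ∑ i, spin (σ1 i) * spin (σ2 i))
      ≤ 4 ^ Fintype.card ι * exp (Fintype.card ι * t ^ 2 / 2) := by
  rw [sum_sum_exp_mul_overlap, mul_div_assoc, exp_nat_mul, ← mul_pow]
  gcongr
  exact cosh_le_exp_half_sq t

/-- **Hubbard–Stratonovich bound for the coupled entropy.**  For every `N` and
`0 ≤ λ₀ < 1`,
`Σ_{σ¹,σ² ∈ {−1,1}^N} exp((λ₀/(2N)) (Σ_i σ¹_i σ²_i)²) ≤ 4^N (1 − λ₀)^{-1/2}`. -/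
theorem hubbard_stratonovich_coupled_entropy_bound
    (N : ℕ) (lam0 : ℝ) (h0 : 0 ≤ lam0) (h1 : lam0 < 1) :
    ∑ σ1 : Fin N → Bool, ∑ σ2 : Fin N → Bool,
      Real.exp (lam0 / (2 * (N : ℝ)) * (∑ i : Fin N, spin (σ1 i) * spin (σ2 i)) ^ 2)
      ≤ (4 : ℝ) ^ N * (1 - lam0) ^ (-(1 / 2) : ℝ) := by
  have hc : 0 ≤ lam0 / N := by positivity
  -- an inequality, not an equation: `lam0 / 0 = 0`
  have hNc : N * (lam0 / N) ≤ lam0 := by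
    rcases N.eq_zero_or_pos with rfl | hN
    · simpa using h0
    · rw [mul_div_cancel₀ _ (by positivity)]
  have hmgf : ∀ t : ℝ, ∑ σ1 : Fin N → Bool, ∑ σ2 : Fin N → Bool,
      exp (t * (√(lam0 / N) * ∑ i, spin (σ1 i) * spin (σ2 i))) ≤ 4 ^ N * exp (lam0 * t ^ 2 / 2) :=
    fun t ↦ calc
      _ ≤ 4 ^ N * exp (N * (t * √(lam0 / N)) ^ 2 / 2) := by
          simpa [mul_assoc] using sum_sum_exp_mul_overlap_le (ι := Fin N) (t * √(lam0 / N))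
      _ ≤ 4 ^ N * exp (lam0 * t ^ 2 / 2) := by
          rw [mul_pow, sq_sqrt hc, mul_left_comm, mul_comm lam0]
          gcongr
  have key := sum_exp_sq_div_two_le
    (fun p : (Fin N → Bool) × (Fin N → Bool) ↦ √(lam0 / N) * ∑ i, spin (p.1 i) * spin (p.2 i))
    h1 (by simpa only [Fintype.sum_prod_type] using hmgf)
  rw [Fintype.sum_prod_type] at key
  convert key using 4 with σ1 _ σ2 _
  rw [mul_pow, sq_sqrt hc]
  ring

end
end
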